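/- Suppose r, Ω, ψ satisfy the toroidally symmetric Einstein–Klein-Gordon system (EKG1)–(EKG5) on U. Define ϖ₁ = 2rᵤrᵥr/Ω² + r³/(2l²) and the potential V = (2g²/r³)ϖ₁ + (8πag/l²)ψ². Then the twisted form of the Klein-Gordon equation holds: ∂ᵥ( r·∇̃ᵤψ ) = (1/2 − κ)·rᵤ·∇̃ᵥψ − (Ω²/4)rVψ, and symmetrically ∂ᵤ( r·∇̃ᵥψ ) = (1/2 − κ)·rᵥ·∇̃ᵤψ − (Ω²/4)rVψ. -/

import Mathlib

/-- Partial derivative in the first (`u`) coordinate. -/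
noncomputable def pdu (f : ℝ × ℝ → ℝ) (p : ℝ × ℝ) : ℝ := deriv (fun u => f (u, p.2)) p.1

/-- Partial derivative in the second (`v`) coordinate. -/
noncomputable def pdv (f : ℝ × ℝ → ℝ) (p : ℝ × ℝ) : ℝ := deriv (fun v => f (p.1, v)) p.2

/-- The first renormalised Hawking mass `ϖ₁ = 2rᵤrᵥr/Ω² + r³/(2l²)`. -/
noncomputable def varpi1 (l : ℝ) (r Ω : ℝ × ℝ → ℝ) (q : ℝ × ℝ) : ℝ :=
  2 * pdu r q * pdv r q * r q / (Ω q) ^ 2 + (r q) ^ 3 / (2 * l ^ 2)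

/-- The potential `V = (2g²/r³)ϖ₁ + (8πag/l²)ψ²`. -/
noncomputable def potV (l a g : ℝ) (r Ω ψ : ℝ × ℝ → ℝ) (q : ℝ × ℝ) : ℝ :=
  (2 * g ^ 2 / (r q) ^ 3) * varpi1 l r Ω q + (8 * Real.pi * a * g / l ^ 2) * (ψ q) ^ 2

/-!
Expanding `∂ᵥ(r∇̃ᵤψ) = ∂ᵥ(rψᵤ) − g∂ᵥ(rᵤψ)` by the product rule and substituting `r_{uv}` from
(EKG3) and `ψ_{uv}` from (EKG5) leaves an algebraic identity in `r, rᵤ, rᵥ, Ω, ψ, ψᵤ, ψᵥ`, which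
holds exactly because `2a = g² + 3g`. The second equation is the same computation with `u` and
`v` exchanged, once the mixed partials of the C² functions `r` and `ψ` are known to commute.
-/

open Filter Topology

section Partials

variable {f : ℝ × ℝ → ℝ} {p : ℝ × ℝ}

theorem HasFDerivAt.hasDerivAt_uSlice {f' : ℝ × ℝ →L[ℝ] ℝ} (hf : HasFDerivAt f f' p) :
    HasDerivAt (fun u => f (u, p.2)) (f' (1, 0)) p.1 :=
  hf.comp_hasDerivAt_of_eq p.1 ((hasDerivAt_id _).prodMk (hasDerivAt_const _ _)) rfl

theorem HasFDerivAt.hasDerivAt_vSlice {f' : ℝ × ℝ →L[ℝ] ℝ} (hf : HasFDerivAt f f' p) :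
    HasDerivAt (fun v => f (p.1, v)) (f' (0, 1)) p.2 :=
  hf.comp_hasDerivAt_of_eq p.2 ((hasDerivAt_const _ _).prodMk (hasDerivAt_id _)) rfl

theorem HasFDerivAt.pdu_eq {f' : ℝ × ℝ →L[ℝ] ℝ} (hf : HasFDerivAt f f' p) :
    pdu f p = f' (1, 0) :=
  hf.hasDerivAt_uSlice.deriv

theorem HasFDerivAt.pdv_eq {f' : ℝ × ℝ →L[ℝ] ℝ} (hf : HasFDerivAt f f' p) :
    pdv f p = f' (0, 1) :=
  hf.hasDerivAt_vSlice.deriv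

theorem DifferentiableAt.hasDerivAt_pdu (hf : DifferentiableAt ℝ f p) :
    HasDerivAt (fun u => f (u, p.2)) (pdu f p) p.1 := by
  rw [hf.hasFDerivAt.pdu_eq]
  exact hf.hasFDerivAt.hasDerivAt_uSlice

theorem DifferentiableAt.hasDerivAt_pdv (hf : DifferentiableAt ℝ f p) :
    HasDerivAt (fun v => f (p.1, v)) (pdv f p) p.2 := by
  rw [hf.hasFDerivAt.pdv_eq]
  exact hf.hasFDerivAt.hasDerivAt_vSlice

theorem ContDiffAt.hasFDerivAt_fderiv_apply (hf : ContDiffAt ℝ 2 f p) (w : ℝ × ℝ) :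
    HasFDerivAt (fun q => fderiv ℝ f q w) ((fderiv ℝ (fderiv ℝ f) p).flip w) p := by
  have hf' : HasFDerivAt (fderiv ℝ f) (fderiv ℝ (fderiv ℝ f) p) p :=
    ((hf.fderiv_right (m := 1) (by norm_num)).differentiableAt (by norm_num)).hasFDerivAt
  simpa using hf'.clm_apply (hasFDerivAt_const w p)

theorem ContDiffAt.eventually_differentiableAt (hf : ContDiffAt ℝ 2 f p) :
    ∀ᶠ q in 𝓝 p, DifferentiableAt ℝ f q :=
  (hf.eventually (by simp)).mono fun _ hq => hq.differentiableAt (by norm_num)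

theorem ContDiffAt.hasFDerivAt_pdu (hf : ContDiffAt ℝ 2 f p) :
    HasFDerivAt (pdu f) ((fderiv ℝ (fderiv ℝ f) p).flip (1, 0)) p :=
  (hf.hasFDerivAt_fderiv_apply (1, 0)).congr_of_eventuallyEq <|
    hf.eventually_differentiableAt.mono fun _ hq => hq.hasFDerivAt.pdu_eq

theorem ContDiffAt.hasFDerivAt_pdv (hf : ContDiffAt ℝ 2 f p) :
    HasFDerivAt (pdv f) ((fderiv ℝ (fderiv ℝ f) p).flip (0, 1)) p :=
  (hf.hasFDerivAt_fderiv_apply (0, 1)).congr_of_eventuallyEq <|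
    hf.eventually_differentiableAt.mono fun _ hq => hq.hasFDerivAt.pdv_eq

theorem ContDiffAt.pdu_pdv_comm (hf : ContDiffAt ℝ 2 f p) :
    pdu (pdv f) p = pdv (pdu f) p := by
  rw [hf.hasFDerivAt_pdv.pdu_eq, hf.hasFDerivAt_pdu.pdv_eq, ContinuousLinearMap.flip_apply,
    ContinuousLinearMap.flip_apply, hf.isSymmSndFDerivAt (by simp)]

end Partials

theorem HasDerivAt.mul_sub_div_mul {R Φ Q Ψ : ℝ → ℝ} {R' Φ' Q' Ψ' t : ℝ} (g : ℝ)
    (hR : HasDerivAt R R' t) (hΦ : HasDerivAt Φ Φ' t) (hQ : HasDerivAt Q Q' t)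
    (hΨ : HasDerivAt Ψ Ψ' t) (hR0 : R t ≠ 0) :
    HasDerivAt (fun s => R s * (Φ s - g * (Q s / R s) * Ψ s))
      (R' * Φ t + R t * Φ' - g * (Q' * Ψ t + Q t * Ψ')) t := by
  refine (hR.mul (hΦ.sub (((hQ.div hR hR0).const_mul g).mul hΨ))).congr_deriv ?_
  simp only [Pi.mul_apply, Pi.sub_apply, Pi.div_apply]
  field_simp
  ring

section TwistedDerivative

variable {R Φ Q Ψ : ℝ × ℝ → ℝ} {p : ℝ × ℝ}

theorem pdu_mul_sub_div_mul (g : ℝ) (hR : DifferentiableAt ℝ R p)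
    (hΦ : DifferentiableAt ℝ Φ p) (hQ : DifferentiableAt ℝ Q p) (hΨ : DifferentiableAt ℝ Ψ p)
    (hR0 : R p ≠ 0) :
    pdu (fun q => R q * (Φ q - g * (Q q / R q) * Ψ q)) p
      = pdu R p * Φ p + R p * pdu Φ p - g * (pdu Q p * Ψ p + Q p * pdu Ψ p) :=
  (hR.hasDerivAt_pdu.mul_sub_div_mul g hΦ.hasDerivAt_pdu hQ.hasDerivAt_pdu
    hΨ.hasDerivAt_pdu hR0).deriv

theorem pdv_mul_sub_div_mul (g : ℝ) (hR : DifferentiableAt ℝ R p)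
    (hΦ : DifferentiableAt ℝ Φ p) (hQ : DifferentiableAt ℝ Q p) (hΨ : DifferentiableAt ℝ Ψ p)
    (hR0 : R p ≠ 0) :
    pdv (fun q => R q * (Φ q - g * (Q q / R q) * Ψ q)) p
      = pdv R p * Φ p + R p * pdv Φ p - g * (pdv Q p * Ψ p + Q p * pdv Ψ p) :=
  (hR.hasDerivAt_pdv.mul_sub_div_mul g hΦ.hasDerivAt_pdv hQ.hasDerivAt_pdv
    hΨ.hasDerivAt_pdv hR0).deriv

end TwistedDerivative

theorem twisted_kleinGordon_algebra {a g l R W Ψ ru rv ψu ψv : ℝ} (hR : R ≠ 0) (hW : W ≠ 0)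
    (hag : 2 * a = g ^ 2 + 3 * g) :
    rv * ψu + R * (-(ru / R) * ψv - rv / R * ψu - W ^ 2 * a / (2 * l ^ 2) * Ψ)
      - g * ((-(ru * rv) / R + 2 * Real.pi * a * R / l ^ 2 * W ^ 2 * Ψ ^ 2
          - 3 / 4 * (R / l ^ 2) * W ^ 2) * Ψ + ru * ψv)
    = -(1 + g) * ru * (ψv - g * (rv / R) * Ψ)
      - W ^ 2 / 4 * R * (2 * g ^ 2 / R ^ 3 * (2 * ru * rv * R / W ^ 2 + R ^ 3 / (2 * l ^ 2))
          + 8 * Real.pi * a * g / l ^ 2 * Ψ ^ 2) * Ψ := by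
  rw [show a = (g ^ 2 + 3 * g) / 2 by linarith]
  field_simp
  ring

theorem stmt_7_general (U : Set (ℝ × ℝ)) (hU : IsOpen U)
    (r Ω ψ : ℝ × ℝ → ℝ)
    (l κ a g : ℝ)
    (ha : a = κ ^ 2 / 2 - 9 / 8) (hg : g = -3 / 2 + κ)
    (hrC : ContDiffOn ℝ 2 r U) (hψC : ContDiffOn ℝ 2 ψ U)
    (hrpos : ∀ p ∈ U, 0 < r p) (hΩpos : ∀ p ∈ U, 0 < Ω p)
    (hEKG3 : ∀ p ∈ U, pdv (pdu r) p = -(pdu r p * pdv r p) / r p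
        + (2 * Real.pi * a * r p / l ^ 2) * (Ω p) ^ 2 * (ψ p) ^ 2
        - (3 / 4) * (r p / l ^ 2) * (Ω p) ^ 2)
    (hEKG5 : ∀ p ∈ U, pdv (pdu ψ) p = -(pdu r p / r p) * pdv ψ p
        - (pdv r p / r p) * pdu ψ p - ((Ω p) ^ 2 * a / (2 * l ^ 2)) * ψ p) :
    ∀ p ∈ U,
      pdv (fun q => r q * (pdu ψ q - g * (pdu r q / r q) * ψ q)) p
        = (1 / 2 - κ) * pdu r p * (pdv ψ p - g * (pdv r p / r p) * ψ p)
          - ((Ω p) ^ 2 / 4) * r p * potV l a g r Ω ψ p * ψ p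
      ∧
      pdu (fun q => r q * (pdv ψ q - g * (pdv r q / r q) * ψ q)) p
        = (1 / 2 - κ) * pdv r p * (pdu ψ p - g * (pdu r p / r p) * ψ p)
          - ((Ω p) ^ 2 / 4) * r p * potV l a g r Ω ψ p * ψ p := by
  intro p hp
  have hR : r p ≠ 0 := (hrpos p hp).ne'
  have hW : Ω p ≠ 0 := (hΩpos p hp).ne'
  have hag : 2 * a = g ^ 2 + 3 * g := by rw [ha, hg]; ring
  have hr := hrC.contDiffAt (hU.mem_nhds hp)
  have hψ := hψC.contDiffAt (hU.mem_nhds hp)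
  have hr1 : DifferentiableAt ℝ r p := hr.differentiableAt (by norm_num)
  have hψ1 : DifferentiableAt ℝ ψ p := hψ.differentiableAt (by norm_num)
  constructor
  · rw [pdv_mul_sub_div_mul g hr1 hψ.hasFDerivAt_pdu.differentiableAt
      hr.hasFDerivAt_pdu.differentiableAt hψ1 hR, hEKG5 p hp, hEKG3 p hp, potV, varpi1]
    linear_combination twisted_kleinGordon_algebra (l := l) (Ψ := ψ p) (ru := pdu r p)
      (rv := pdv r p) (ψu := pdu ψ p) (ψv := pdv ψ p) hR hW hag
      - pdu r p * (pdv ψ p - g * (pdv r p / r p) * ψ p) * hg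
  · rw [pdu_mul_sub_div_mul g hr1 hψ.hasFDerivAt_pdv.differentiableAt
      hr.hasFDerivAt_pdv.differentiableAt hψ1 hR, hψ.pdu_pdv_comm, hr.pdu_pdv_comm,
      hEKG5 p hp, hEKG3 p hp, potV, varpi1]
    linear_combination twisted_kleinGordon_algebra (l := l) (Ψ := ψ p) (ru := pdv r p)
      (rv := pdu r p) (ψu := pdv ψ p) (ψv := pdu ψ p) hR hW hag
      - pdv r p * (pdu ψ p - g * (pdu r p / r p) * ψ p) * hg

/-- If `r, Ω, ψ` satisfy the toroidally symmetric Einstein–Klein-Gordon system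
(EKG1)–(EKG5) on an open set `U`, then the twisted form of the Klein-Gordon equation
holds: `∂ᵥ(r∇̃ᵤψ) = (1/2 − κ)rᵤ∇̃ᵥψ − (Ω²/4)rVψ`, and symmetrically
`∂ᵤ(r∇̃ᵥψ) = (1/2 − κ)rᵥ∇̃ᵤψ − (Ω²/4)rVψ`, where `∇̃ᵤψ = ψᵤ − g(rᵤ/r)ψ`,
`∇̃ᵥψ = ψᵥ − g(rᵥ/r)ψ`. -/
theorem stmt_7 (U : Set (ℝ × ℝ)) (hU : IsOpen U)
    (r Ω ψ : ℝ × ℝ → ℝ)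
    (l κ a g : ℝ) (hl : 0 < l) (hκ : κ ∈ Set.Ioo (0 : ℝ) 1)
    (ha : a = κ ^ 2 / 2 - 9 / 8) (hg : g = -3 / 2 + κ)
    (hrC : ContDiffOn ℝ 2 r U) (hΩC : ContDiffOn ℝ 2 Ω U) (hψC : ContDiffOn ℝ 2 ψ U)
    (hrpos : ∀ p ∈ U, 0 < r p) (hΩpos : ∀ p ∈ U, 0 < Ω p)
    (hEKG1 : ∀ p ∈ U, pdu (fun q => pdu r q / (Ω q) ^ 2) p
        = -(4 * Real.pi) * r p * (pdu ψ p) ^ 2 / (Ω p) ^ 2)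
    (hEKG2 : ∀ p ∈ U, pdv (fun q => pdv r q / (Ω q) ^ 2) p
        = -(4 * Real.pi) * r p * (pdv ψ p) ^ 2 / (Ω p) ^ 2)
    (hEKG3 : ∀ p ∈ U, pdv (pdu r) p = -(pdu r p * pdv r p) / r p
        + (2 * Real.pi * a * r p / l ^ 2) * (Ω p) ^ 2 * (ψ p) ^ 2
        - (3 / 4) * (r p / l ^ 2) * (Ω p) ^ 2)
    (hEKG4 : ∀ p ∈ U, pdv (pdu (fun q => Real.log (Ω q))) p
        = -(4 * Real.pi) * pdu ψ p * pdv ψ p + (pdu r p * pdv r p) / (r p) ^ 2)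
    (hEKG5 : ∀ p ∈ U, pdv (pdu ψ) p = -(pdu r p / r p) * pdv ψ p
        - (pdv r p / r p) * pdu ψ p - ((Ω p) ^ 2 * a / (2 * l ^ 2)) * ψ p) :
    ∀ p ∈ U,
      pdv (fun q => r q * (pdu ψ q - g * (pdu r q / r q) * ψ q)) p
        = (1 / 2 - κ) * pdu r p * (pdv ψ p - g * (pdv r p / r p) * ψ p)
          - ((Ω p) ^ 2 / 4) * r p * potV l a g r Ω ψ p * ψ p
      ∧
      pdu (fun q => r q * (pdv ψ q - g * (pdv r q / r q) * ψ q)) p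
        = (1 / 2 - κ) * pdv r p * (pdu ψ p - g * (pdu r p / r p) * ψ p)
          - ((Ω p) ^ 2 / 4) * r p * potV l a g r Ω ψ p * ψ p :=
  stmt_7_general U hU r Ω ψ l κ a g ha hg hrC hψC hrpos hΩpos hEKG3 hEKG5
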